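/- arXiv:2511.10565 — 2 statements merged into one kernel-verified Lean document; each statement's English description precedes it below -/
import Mathlib

section
/- The less-sequencing relation ≲ is transitive: if e₁ ≲ e₂ and e₂ ≲ e₃ then e₁ ≲ e₃. -/
/-- Expressions: values (constants), sequencing of a value before an expression,
let-bindings, and conditionals. -/
inductive Expr : Type
  | val : Nat → Expr
  | seq : Nat → Expr → Expr
  | letE : Expr → Expr → Expr
  | ite : Nat → Expr → Expr → Expr

/-- The less-sequencing relation `≲`, defined by rules:
(a) `v ≲ v` for values; (b) `e₁ ≲ e₂` implies `e₁ ≲ (v ; e₂)`;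
(c) congruence for let; (d) congruence for if with identical guard. -/
inductive Less : Expr → Expr → Prop
  | val (v : Nat) : Less (.val v) (.val v)
  | addSeq (v : Nat) {e₁ e₂ : Expr} : Less e₁ e₂ → Less e₁ (.seq v e₂)
  | letE {e₁ e₁' e₂ e₂' : Expr} : Less e₁ e₁' → Less e₂ e₂' →
      Less (.letE e₁ e₂) (.letE e₁' e₂')
  | ite (v : Nat) {e₁ e₁' e₂ e₂' : Expr} : Less e₁ e₁' → Less e₂ e₂' →
      Less (.ite v e₁ e₂) (.ite v e₁' e₂')

/-- The less-sequencing relation is transitive. -/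
theorem Less.transitive {e₁ e₂ e₃ : Expr} (h₁ : Less e₁ e₂) (h₂ : Less e₂ e₃) :
    Less e₁ e₃ := by
  -- Induct on the second derivation: `addSeq` only grows the right-hand side, so it commutes with
  -- the first derivation, while in the congruence cases `h₁` must end in the same rule.
  induction h₂ generalizing e₁ with
  | val v => exact h₁
  | addSeq v _ ih => exact .addSeq v (ih h₁)
  | letE _ _ iha ihb =>
    cases h₁ with
    | letE pa pb => exact .letE (iha pa) (ihb pb)
  | ite v _ _ iha ihb =>
    cases h₁ with
    | ite _ pa pb => exact .ite v (iha pa) (ihb pb)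
end

section
/- Two traces are equivalent under ≈ if and only if they have the same sequence of non-silent events, i.e., erasing all silent events • from each yields equal lists. -/
/-- Events: observable events from `E` or the silent event `•`. -/
abbrev Event (E : Type) := E ⊕ Unit

/-- The silent event `•`. -/
def silentEv {E : Type} : Event E := Sum.inr ()

/-- Trace equivalence `≈`, generated by: reflexivity; appending a silent event;
symmetry; append-congruence; transitivity. -/
inductive TraceEq {E : Type} : List (Event E) → List (Event E) → Prop
  | refl (t : List (Event E)) : TraceEq t t
  | silent (t : List (Event E)) : TraceEq t (t ++ [silentEv])
  | symm {t₁ t₂ : List (Event E)} : TraceEq t₁ t₂ → TraceEq t₂ t₁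
  | append (a : Event E) {t₁ t₂ : List (Event E)} :
      TraceEq t₁ t₂ → TraceEq (t₁ ++ [a]) (t₂ ++ [a])
  | trans {t₁ t₂ t₃ : List (Event E)} :
      TraceEq t₁ t₂ → TraceEq t₂ t₃ → TraceEq t₁ t₃

/-- Erase all silent events from a trace, keeping the observable events. -/
def eraseSilent {E : Type} (t : List (Event E)) : List E :=
  t.filterMap Sum.getLeft?

/-!
Erasing silent events is invariant under each generator of `≈`, which gives one direction.
Conversely, every trace is `≈` to its normal form `(eraseSilent t).map Sum.inl`: build the trace
from the right, and either append the same observable event on both sides or absorb a silent one.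
Traces with the same erasure thus share a normal form.
-/

section eraseSilent

variable {E : Type}

@[simp]
theorem eraseSilent_append (t s : List (Event E)) :
    eraseSilent (t ++ s) = eraseSilent t ++ eraseSilent s :=
  List.filterMap_append

@[simp]
theorem eraseSilent_singleton_inl (e : E) : eraseSilent [(Sum.inl e : Event E)] = [e] := rfl

@[simp]
theorem eraseSilent_singleton_inr (u : Unit) : eraseSilent [(Sum.inr u : Event E)] = [] := rfl

end eraseSilent

namespace TraceEq

variable {E : Type}

theorem eraseSilent_eq {t₁ t₂ : List (Event E)} (h : TraceEq t₁ t₂) :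
    eraseSilent t₁ = eraseSilent t₂ := by
  induction h with
  | refl t => rfl
  | silent t => simp [silentEv]
  | symm _ ih => exact ih.symm
  | append a _ ih => simp [ih]
  | trans _ _ ih₁ ih₂ => exact ih₁.trans ih₂

theorem self_map_inl_eraseSilent (t : List (Event E)) :
    TraceEq t ((eraseSilent t).map Sum.inl) := by
  induction t using List.reverseRecOn with
  | nil => exact refl []
  | append_singleton t a ih =>
    cases a with
    | inl e => simpa using ih.append (Sum.inl e)
    | inr u => simpa [silentEv] using (silent t).symm.trans ih

end TraceEq

/-- Two traces are equivalent under `≈` iff erasing all silent events yields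
equal lists of observable events. -/
theorem traceEq_iff_eraseSilent {E : Type} (t₁ t₂ : List (Event E)) :
    TraceEq t₁ t₂ ↔ eraseSilent t₁ = eraseSilent t₂ := by
  refine ⟨TraceEq.eraseSilent_eq, fun h => ?_⟩
  have h₂ := TraceEq.self_map_inl_eraseSilent t₂
  rw [← h] at h₂
  exact (TraceEq.self_map_inl_eraseSilent t₁).trans h₂.symm
end
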